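/- arXiv:2207.12729 — 3 statements merged into one kernel-verified Lean document; each statement's English description precedes it below -/
import Mathlib

section
/- With the setting of the previous lemma, the map μ ↦ w*(μ) sending a Borel probability measure on X to the unique minimizer of J_μ on ℝ_{≥0}^N is continuous with respect to weak-* convergence of measures: if μ_n ⇀ μ weakly-*, then w*(μ_n) → w*(μ) in ℝ^N. -/
/-!
The minimizers `w*(μ)` all lie in one compact box `K ⊂ (0, ∞)^N`: comparing with the point
`1` bounds `J_μ(w*(μ))` uniformly in `μ`, the blow-up of `πᵢ` at `0` then keeps `w*(μ)ᵢ` away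
from `0`, and `R_σ(x, w) ≥ wᵢ - cᵢ(x)` bounds it from above. The revenue `R_σ(x, ·)` is
`1`-Lipschitz for the sup norm, so `J_{μₙ}(wₙ) → J_μ(a)` whenever `wₙ → a` and `μₙ ⇀ μ`;
hence every cluster point of `w*(μₙ)` minimizes `J_μ`. Since `J_μ` is strictly convex
(log-sum-exp is convex by Hölder's inequality), that minimizer is `w*(μ)`.
-/

open MeasureTheory Filter Set

/-- The equilibrium potential J_μ(w) = Σᵢ πᵢ(wᵢ) + ∫_X R_σ(x,w) dμ(x), where
R_σ(x,w) = σ log(e^{w₀/σ} + Σᵢ e^{(wᵢ - cᵢ(x))/σ}). -/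
noncomputable def Jfun {d N : ℕ} (X : Set (EuclideanSpace ℝ (Fin d)))
    (c : Fin N → EuclideanSpace ℝ (Fin d) → ℝ) (w0 σ : ℝ) (π : Fin N → ℝ → ℝ)
    (μ : Measure X) (w : Fin N → ℝ) : ℝ :=
  ∑ i, π i (w i) +
    ∫ x, σ * Real.log (Real.exp (w0 / σ) + ∑ i, Real.exp ((w i - c i ↑x) / σ)) ∂μ

open Topology

theorem Real.sum_rpow_mul_rpow_le {ι : Type*} (s : Finset ι) {f g : ι → ℝ}
    (hf : ∀ i ∈ s, 0 ≤ f i) (hg : ∀ i ∈ s, 0 ≤ g i) {a b : ℝ} (ha : 0 < a) (hb : 0 < b)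
    (hab : a + b = 1) :
    ∑ i ∈ s, f i ^ a * g i ^ b ≤ (∑ i ∈ s, f i) ^ a * (∑ i ∈ s, g i) ^ b := by
  have hpq : Real.HolderConjugate (1 / a) (1 / b) :=
    Real.holderConjugate_iff.2 ⟨by rw [one_div, one_lt_inv₀ ha]; linarith, by simpa using hab⟩
  have hroot : ∀ {t : ℝ} {x : ℝ}, 0 < t → 0 ≤ x → (x ^ t) ^ (1 / t) = x := fun ht hx => by
    rw [← Real.rpow_mul hx, mul_one_div_cancel ht.ne', Real.rpow_one]
  have h := Real.inner_le_Lp_mul_Lq_of_nonneg s hpq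
    (fun i hi => Real.rpow_nonneg (hf i hi) a) (fun i hi => Real.rpow_nonneg (hg i hi) b)
  rwa [Finset.sum_congr rfl fun i hi => hroot ha (hf i hi),
    Finset.sum_congr rfl fun i hi => hroot hb (hg i hi), one_div_one_div, one_div_one_div] at h

theorem convexOn_log_sum_exp {ι : Type*} [Fintype ι] [Nonempty ι] :
    ConvexOn ℝ univ fun u : ι → ℝ => Real.log (∑ i, Real.exp (u i)) := by
  refine convexOn_iff_forall_pos.2 ⟨convex_univ, fun u _ v _ a b ha hb hab => ?_⟩
  have hexp : ∀ i, Real.exp ((a • u + b • v) i) = Real.exp (u i) ^ a * Real.exp (v i) ^ b :=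
    fun i => by simp only [Pi.add_apply, Pi.smul_apply, smul_eq_mul, Real.exp_add,
      ← Real.exp_mul, mul_comm]
  have hpos : ∀ w : ι → ℝ, 0 < ∑ i, Real.exp (w i) := fun w =>
    Finset.sum_pos (fun i _ => Real.exp_pos _) Finset.univ_nonempty
  calc Real.log (∑ i, Real.exp ((a • u + b • v) i))
      ≤ Real.log ((∑ i, Real.exp (u i)) ^ a * (∑ i, Real.exp (v i)) ^ b) := by
        refine Real.log_le_log (hpos _) ?_
        simp only [hexp]
        exact Real.sum_rpow_mul_rpow_le _ (fun i _ => (Real.exp_pos _).le)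
          (fun i _ => (Real.exp_pos _).le) ha hb hab
    _ = a • Real.log (∑ i, Real.exp (u i)) + b • Real.log (∑ i, Real.exp (v i)) := by
        rw [Real.log_mul (Real.rpow_pos_of_pos (hpos u) a).ne'
          (Real.rpow_pos_of_pos (hpos v) b).ne', Real.log_rpow (hpos u), Real.log_rpow (hpos v)]
        rfl

theorem StrictConvexOn.sum_pi {𝕜 ι : Type*} [Field 𝕜] [LinearOrder 𝕜] [IsStrictOrderedRing 𝕜]
    [Fintype ι] {s : ι → Set 𝕜} {f : ι → 𝕜 → 𝕜} (hf : ∀ i, StrictConvexOn 𝕜 (s i) (f i)) :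
    StrictConvexOn 𝕜 (univ.pi s) fun x => ∑ i, f i (x i) := by
  refine ⟨convex_pi fun i _ => (hf i).1, fun x hx y hy hxy a b ha hb hab => ?_⟩
  obtain ⟨j, hj⟩ := Function.ne_iff.1 hxy
  simp only [smul_eq_mul, Finset.mul_sum, ← Finset.sum_add_distrib]
  refine Finset.sum_lt_sum (fun i _ => ?_) ⟨j, Finset.mem_univ j, ?_⟩
  · exact (hf i).convexOn.2 (hx i (mem_univ i)) (hy i (mem_univ i)) ha.le hb.le hab
  · exact (hf j).2 (hx j (mem_univ j)) (hy j (mem_univ j)) hj ha hb hab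

theorem convexOn_integral {α E : Type*} [MeasurableSpace α] {μ : Measure α} [AddCommGroup E]
    [Module ℝ E] {s : Set E} (hs : Convex ℝ s) {F : E → α → ℝ}
    (hF : ∀ x, ConvexOn ℝ s (F · x)) (hint : ∀ w ∈ s, Integrable (F w) μ) :
    ConvexOn ℝ s fun w => ∫ x, F w x ∂μ := by
  refine ⟨hs, fun u hu v hv a b ha hb hab => ?_⟩
  calc ∫ x, F (a • u + b • v) x ∂μ ≤ ∫ x, (a * F u x + b * F v x) ∂μ :=
        integral_mono (hint _ (hs hu hv ha hb hab))
          (((hint u hu).const_mul a).add ((hint v hv).const_mul b))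
          fun x => (hF x).2 hu hv ha hb hab
    _ = a • ∫ x, F u x ∂μ + b • ∫ x, F v x ∂μ := by
        rw [integral_add ((hint u hu).const_mul a) ((hint v hv).const_mul b),
          integral_const_mul, integral_const_mul]
        rfl

theorem LipschitzWith.integral {α E : Type*} [MeasurableSpace α] {μ : Measure α}
    [IsProbabilityMeasure μ] [PseudoMetricSpace E] {F : E → α → ℝ} {K : NNReal}
    (hF : ∀ x, LipschitzWith K (F · x)) (hint : ∀ w, Integrable (F w) μ) :
    LipschitzWith K fun w => ∫ x, F w x ∂μ := by
  refine LipschitzWith.of_dist_le_mul fun u v => ?_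
  rw [Real.dist_eq, ← integral_sub (hint u) (hint v)]
  have hbound : ∀ x, ‖F u x - F v x‖ ≤ K * dist u v := fun x => (hF x).dist_le_mul u v
  simpa using norm_integral_le_of_norm_le_const (μ := μ) (Eventually.of_forall hbound)

theorem Filter.Tendsto.apply_of_lipschitzWith {α E F : Type*} [PseudoMetricSpace E]
    [PseudoMetricSpace F] {l : Filter α} {f : α → E → F} {K : NNReal}
    (hf : ∀ n, LipschitzWith K (f n)) {a : E} {b : F} (hfa : Tendsto (fun n => f n a) l (𝓝 b))
    {w : α → E} (hw : Tendsto w l (𝓝 a)) : Tendsto (fun n => f n (w n)) l (𝓝 b) := by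
  rw [tendsto_iff_dist_tendsto_zero] at hfa hw ⊢
  have hbound : Tendsto (fun n => K * dist (w n) a + dist (f n a) b) l (𝓝 0) := by
    simpa using (hw.const_mul (K : ℝ)).add hfa
  refine squeeze_zero (fun _ => dist_nonneg) (fun n => ?_) hbound
  exact (dist_triangle _ (f n a) _).trans (add_le_add_left ((hf n).dist_le_mul _ _) _)

theorem IsMinOn.of_tendsto {α E β : Type*} [TopologicalSpace β] [Preorder β]
    [OrderClosedTopology β] {l : Filter α} [l.NeBot] {f : α → E → β} {g : E → β} {s : Set E}
    {w : α → E} {a : E} (hmin : ∀ n, IsMinOn (f n) s (w n))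
    (hfw : Tendsto (fun n => f n (w n)) l (𝓝 (g a)))
    (hf : ∀ v ∈ s, Tendsto (fun n => f n v) l (𝓝 (g v))) : IsMinOn g s a :=
  fun v hv => le_of_tendsto_of_tendsto' hfw (hf v hv) fun n => hmin n hv

noncomputable def smoothMax {ι : Type*} [Fintype ι] (σ w0 : ℝ) (u : ι → ℝ) : ℝ :=
  σ * Real.log (Real.exp (w0 / σ) + ∑ i, Real.exp (u i / σ))

section smoothMax

variable {ι : Type*} [Fintype ι] {σ : ℝ} (w0 : ℝ)

theorem smoothMax_eq_log_sum_exp (u : ι → ℝ) :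
    smoothMax σ w0 u =
      σ * Real.log (∑ j : Option ι, Real.exp (j.elim (w0 / σ) fun i => u i / σ)) := by
  rw [Fintype.sum_option]
  rfl

variable (hσ : 0 < σ)
include hσ

theorem le_smoothMax_of_exp_le {u : ι → ℝ} {t : ℝ}
    (h : Real.exp (t / σ) ≤ Real.exp (w0 / σ) + ∑ i, Real.exp (u i / σ)) :
    t ≤ smoothMax σ w0 u := by
  have hlog := Real.log_le_log (Real.exp_pos _) h
  rw [Real.log_exp] at hlog
  calc t = σ * (t / σ) := by field_simp
    _ ≤ smoothMax σ w0 u := mul_le_mul_of_nonneg_left hlog hσ.le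

theorem le_smoothMax (u : ι → ℝ) : w0 ≤ smoothMax σ w0 u :=
  le_smoothMax_of_exp_le w0 hσ <|
    le_add_of_nonneg_right (Finset.sum_nonneg fun _ _ => (Real.exp_pos _).le)

theorem apply_le_smoothMax (u : ι → ℝ) (i : ι) : u i ≤ smoothMax σ w0 u :=
  le_smoothMax_of_exp_le w0 hσ <| le_add_of_nonneg_of_le (Real.exp_pos _).le <|
    Finset.single_le_sum (f := fun j => Real.exp (u j / σ)) (fun _ _ => (Real.exp_pos _).le)
      (Finset.mem_univ i)

theorem smoothMax_le_add {u v : ι → ℝ} {M : ℝ} (hM : 0 ≤ M) (h : ∀ i, u i ≤ v i + M) :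
    smoothMax σ w0 u ≤ smoothMax σ w0 v + M := by
  have hsum : Real.exp (w0 / σ) + ∑ i, Real.exp (u i / σ)
      ≤ Real.exp (M / σ) * (Real.exp (w0 / σ) + ∑ i, Real.exp (v i / σ)) := by
    rw [mul_add, Finset.mul_sum]
    refine add_le_add (le_mul_of_one_le_left (Real.exp_pos _).le
      (Real.one_le_exp (div_nonneg hM hσ.le))) (Finset.sum_le_sum fun i _ => ?_)
    rw [← Real.exp_add, ← add_div, Real.exp_le_exp, div_le_div_iff_of_pos_right hσ]
    linarith [h i]
  have hlog := Real.log_le_log (by positivity) hsum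
  rw [Real.log_mul (Real.exp_pos _).ne' (by positivity), Real.log_exp] at hlog
  calc smoothMax σ w0 u
      ≤ σ * (M / σ + Real.log (Real.exp (w0 / σ) + ∑ i, Real.exp (v i / σ))) :=
        mul_le_mul_of_nonneg_left hlog hσ.le
    _ = smoothMax σ w0 v + M := by rw [smoothMax]; field_simp; ring

theorem convexOn_smoothMax : ConvexOn ℝ univ (smoothMax σ w0 : (ι → ℝ) → ℝ) := by
  refine ⟨convex_univ, fun u _ v _ a b ha hb hab => ?_⟩
  let lift : (ι → ℝ) → Option ι → ℝ := fun u j => j.elim (w0 / σ) fun i => u i / σ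
  have hlift : lift (a • u + b • v) = a • lift u + b • lift v := by
    funext j
    cases j with
    | none => simp only [lift, Option.elim, Pi.add_apply, Pi.smul_apply, smul_eq_mul,
        ← add_mul, hab, one_mul]
    | some i => simp only [lift, Option.elim, Pi.add_apply, Pi.smul_apply, smul_eq_mul]; ring
  have h := convexOn_log_sum_exp.2 (mem_univ (lift u)) (mem_univ (lift v)) ha hb hab
  rw [← hlift] at h
  simp only [smoothMax_eq_log_sum_exp, smul_eq_mul] at h ⊢
  calc σ * Real.log (∑ j, Real.exp (lift (a • u + b • v) j))
      ≤ σ * (a * Real.log (∑ j, Real.exp (lift u j))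
          + b * Real.log (∑ j, Real.exp (lift v j))) :=
        mul_le_mul_of_nonneg_left h hσ.le
    _ = _ := by ring

theorem lipschitzWith_smoothMax_sub (y : ι → ℝ) :
    LipschitzWith 1 fun w : ι → ℝ => smoothMax σ w0 fun i => w i - y i :=
  LipschitzWith.of_le_add fun u v => smoothMax_le_add w0 hσ dist_nonneg fun i => by
    have h := dist_le_pi_dist u v i
    rw [Real.dist_eq] at h
    linarith [le_abs_self (u i - v i)]

theorem convexOn_smoothMax_sub (y : ι → ℝ) :
    ConvexOn ℝ univ fun w : ι → ℝ => smoothMax σ w0 fun i => w i - y i := by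
  have h := (convexOn_smoothMax w0 hσ).translate_left (-y)
  simp only [preimage_univ, Function.comp_def, ← sub_eq_add_neg] at h
  exact h

end smoothMax

section Jfun

variable {d N : ℕ} {X : Set (EuclideanSpace ℝ (Fin d))}
  {c : Fin N → EuclideanSpace ℝ (Fin d) → ℝ} {w0 σ : ℝ} {π : Fin N → ℝ → ℝ}

theorem Jfun_eq (μ : Measure X) (w : Fin N → ℝ) :
    Jfun X c w0 σ π μ w =
      ∑ i, π i (w i) + ∫ x, smoothMax σ w0 (fun i => w i - c i x) ∂μ :=
  rfl

variable (hc : ∀ i, Continuous (c i)) (hσ : 0 < σ)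
include hc hσ

theorem continuous_smoothMax_sub (w : Fin N → ℝ) :
    Continuous fun x : X => smoothMax σ w0 (fun i => w i - c i x) := by
  have h := (lipschitzWith_smoothMax_sub w0 hσ (0 : Fin N → ℝ)).continuous
  simp only [Pi.zero_apply, sub_zero] at h
  exact h.comp' (continuous_pi fun i =>
    continuous_const.sub ((hc i).comp continuous_subtype_val))

variable [CompactSpace X]

theorem integrable_smoothMax_sub (μ : Measure X) [IsFiniteMeasure μ] (w : Fin N → ℝ) :
    Integrable (fun x : X => smoothMax σ w0 (fun i => w i - c i x)) μ :=
  (continuous_smoothMax_sub hc hσ w).integrable_of_hasCompactSupport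
    (HasCompactSupport.of_compactSpace _)

theorem strictConvexOn_Jfun (hπ : ∀ i, StrictConvexOn ℝ (Ioi 0) (π i)) (μ : Measure X)
    [IsFiniteMeasure μ] : StrictConvexOn ℝ {v | ∀ i, 0 < v i} (Jfun X c w0 σ π μ) := by
  have hS : {v : Fin N → ℝ | ∀ i, 0 < v i} = univ.pi fun _ => Ioi 0 := by ext; simp
  have hR : ConvexOn ℝ univ fun w : Fin N → ℝ =>
      ∫ x, smoothMax σ w0 (fun i => w i - c i x) ∂μ :=
    convexOn_integral convex_univ (fun x => convexOn_smoothMax_sub w0 hσ fun i => c i x)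
      fun w _ => integrable_smoothMax_sub hc hσ μ w
  rw [hS]
  exact (StrictConvexOn.sum_pi hπ).add_convexOn
    (hR.subset (subset_univ _) (convex_pi fun _ _ => convex_Ioi 0))

theorem tendsto_Jfun (hπ : ∀ i, ContinuousOn (π i) (Ioi 0)) {α : Type*} {l : Filter α}
    {ν : α → Measure X} [∀ n, IsProbabilityMeasure (ν n)] {μ : Measure X}
    (hweak : ∀ f : C(X, ℝ), Tendsto (fun n => ∫ x, f x ∂(ν n)) l (𝓝 (∫ x, f x ∂μ)))
    {w : α → Fin N → ℝ} {a : Fin N → ℝ} (ha : ∀ i, 0 < a i) (hw : Tendsto w l (𝓝 a)) :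
    Tendsto (fun n => Jfun X c w0 σ π (ν n) (w n)) l (𝓝 (Jfun X c w0 σ π μ a)) := by
  simp only [Jfun_eq]
  refine (tendsto_finsetSum _ fun i _ => ?_).add ?_
  · exact ((hπ i).continuousAt (Ioi_mem_nhds (ha i))).tendsto.comp
      (((continuous_apply i).tendsto a).comp hw)
  · have hlip : ∀ n, LipschitzWith 1 fun w : Fin N → ℝ =>
        ∫ x, smoothMax σ w0 (fun i => w i - c i x) ∂(ν n) := fun n =>
      LipschitzWith.integral (fun x : X => lipschitzWith_smoothMax_sub w0 hσ fun i => c i x)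
        (integrable_smoothMax_sub hc hσ _)
    exact Tendsto.apply_of_lipschitzWith hlip (hweak ⟨_, continuous_smoothMax_sub hc hσ a⟩) hw

section Probability

variable (μ : Measure X) [IsProbabilityMeasure μ] {w : Fin N → ℝ}

theorem Jfun_le_of_forall_le {M : ℝ}
    (hM : ∀ x : X, smoothMax σ w0 (fun i => w i - c i x) ≤ M) :
    Jfun X c w0 σ π μ w ≤ ∑ i, π i (w i) + M := by
  have h := integral_mono (integrable_smoothMax_sub hc hσ μ w) (integrable_const M) hM
  simp only [integral_const, probReal_univ, one_smul] at h
  rw [Jfun_eq]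
  linarith

theorem add_le_Jfun_of_le (hπ : ∀ j, 0 ≤ π j (w j)) (i : Fin N) {m : ℝ}
    (hm : ∀ x : X, m ≤ smoothMax σ w0 (fun i => w i - c i x)) :
    π i (w i) + m ≤ Jfun X c w0 σ π μ w := by
  have h := integral_mono (integrable_const m) (integrable_smoothMax_sub hc hσ μ w) hm
  simp only [integral_const, probReal_univ, one_smul] at h
  have hi : π i (w i) ≤ ∑ j, π j (w j) :=
    Finset.single_le_sum (fun j _ => hπ j) (Finset.mem_univ i)
  rw [Jfun_eq]
  linarith

end Probability

theorem exists_isCompact_forall_isMinOn_Jfun_mem (hπ : ∀ i, ∀ v > (0 : ℝ), 0 ≤ π i v)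
    (hπ_blowup : ∀ i, Tendsto (π i) (𝓝[>] 0) atTop) :
    ∃ K ⊆ {v : Fin N → ℝ | ∀ i, 0 < v i}, IsCompact K ∧
      ∀ (μ : Measure X) [IsProbabilityMeasure μ] (w : Fin N → ℝ), (∀ i, 0 < w i) →
        IsMinOn (Jfun X c w0 σ π μ) {v | ∀ i, 0 < v i} w → w ∈ K := by
  obtain ⟨M, hM⟩ :=
    (isCompact_range (continuous_smoothMax_sub (X := X) (w0 := w0) hc hσ 1)).bddAbove
  choose C hC using fun i =>
    (isCompact_range ((hc i).comp (continuous_subtype_val (p := (· ∈ X))))).bddAbove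
  set J₁ := ∑ i, π i 1 + M
  have hε : ∀ i, ∃ ε > 0, ∀ v ∈ Ioo 0 ε, J₁ - w0 < π i v := fun i =>
    mem_nhdsGT_iff_exists_Ioo_subset.1 ((hπ_blowup i).eventually (eventually_gt_atTop _))
  choose ε hε0 hε using hε
  refine ⟨univ.pi fun i => Icc (ε i) (J₁ + C i),
    fun v hv i => (hε0 i).trans_le (hv i (mem_univ i)).1,
    isCompact_univ_pi fun _ => isCompact_Icc, fun μ _ w hw hmin i _ => ?_⟩
  have hJ : Jfun X c w0 σ π μ w ≤ J₁ := (isMinOn_iff.1 hmin _ fun _ => one_pos).trans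
    (Jfun_le_of_forall_le hc hσ μ fun x => hM ⟨x, rfl⟩)
  have hπw : ∀ j, 0 ≤ π j (w j) := fun j => hπ j _ (hw j)
  have hlow := add_le_Jfun_of_le hc hσ μ hπw i fun x => le_smoothMax w0 hσ _
  have hup := add_le_Jfun_of_le hc hσ μ hπw i (m := w i - C i) fun x =>
    (sub_le_sub_left (hC i ⟨x, rfl⟩) _).trans
      (apply_le_smoothMax w0 hσ (fun j => w j - c j x) i)
  refine ⟨le_of_not_gt fun h => ?_, by linarith [hπw i]⟩
  linarith [hε i _ ⟨hw i, h⟩]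

end Jfun

theorem wstar_weak_star_continuous_general (d N : ℕ) (X : Set (EuclideanSpace ℝ (Fin d)))
    (hXc : IsCompact X)
    (c : Fin N → EuclideanSpace ℝ (Fin d) → ℝ) (hc : ∀ i, Continuous (c i))
    (w0 σ : ℝ) (hσ : 0 < σ)
    (π : Fin N → ℝ → ℝ)
    (hπconv : ∀ i, StrictConvexOn ℝ (Ioi 0) (π i))
    (hπnonneg : ∀ i, ∀ v > (0 : ℝ), 0 ≤ π i v)
    (hπblow : ∀ i, Tendsto (π i) (nhdsWithin 0 (Ioi 0)) atTop)
    (ws : Measure X → (Fin N → ℝ))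
    (hws : ∀ μ : Measure X, IsProbabilityMeasure μ →
      (∀ i, 0 < ws μ i) ∧ IsMinOn (Jfun X c w0 σ π μ) {v | ∀ i, 0 < v i} (ws μ))
    (μn : ℕ → Measure X) (μ : Measure X)
    (hμn : ∀ n, IsProbabilityMeasure (μn n)) (hμ : IsProbabilityMeasure μ)
    (hweak : ∀ f : C(X, ℝ),
      Tendsto (fun n => ∫ x, f x ∂(μn n)) atTop (nhds (∫ x, f x ∂μ))) :
    Tendsto (fun n => ws (μn n)) atTop (nhds (ws μ)) := by
  have : CompactSpace X := isCompact_iff_compactSpace.mp hXc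
  obtain ⟨K, hKS, hK, hmemK⟩ :=
    exists_isCompact_forall_isMinOn_Jfun_mem (X := X) (w0 := w0) hc hσ hπnonneg hπblow
  have hπcont : ∀ i, ContinuousOn (π i) (Ioi 0) := fun i =>
    (hπconv i).convexOn.continuousOn isOpen_Ioi
  refine hK.tendsto_nhds_of_unique_mapClusterPt
    (Eventually.of_forall fun n => hmemK _ _ (hws _ (hμn n)).1 (hws _ (hμn n)).2)
    fun a haK ha => ?_
  obtain ⟨ψ, hψ, hlim⟩ := ha.tendsto_subseq
  have hweakψ := fun f => (hweak f).comp hψ.tendsto_atTop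
  have hmin : IsMinOn (Jfun X c w0 σ π μ) {v | ∀ i, 0 < v i} a :=
    IsMinOn.of_tendsto (fun k => (hws _ (hμn (ψ k))).2)
      (tendsto_Jfun hc hσ hπcont hweakψ (hKS haK) hlim)
      fun v hv => tendsto_Jfun hc hσ hπcont hweakψ hv tendsto_const_nhds
  exact (strictConvexOn_Jfun hc hσ hπconv μ).eq_of_isMinOn hmin (hws μ hμ).2 (hKS haK)
    (hws μ hμ).1

/-- the map μ ↦ w*(μ) sending a Borel probability measure on X to the unique
minimizer of J_μ is continuous for weak-* convergence: if μₙ ⇀ μ (i.e. ∫ f dμₙ → ∫ f dμ for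
every continuous f on X), then w*(μₙ) → w*(μ). -/
theorem wstar_weak_star_continuous (d N : ℕ) (X : Set (EuclideanSpace ℝ (Fin d)))
    (hXc : IsCompact X) (hXpos : 0 < volume X)
    (c : Fin N → EuclideanSpace ℝ (Fin d) → ℝ) (hc : ∀ i, Continuous (c i))
    (w0 σ : ℝ) (hw0 : 0 < w0) (hσ : 0 < σ)
    (π π' : Fin N → ℝ → ℝ)
    (hπconv : ∀ i, StrictConvexOn ℝ (Ioi 0) (π i))
    (hπanti : ∀ i, AntitoneOn (π i) (Ioi 0))
    (hπnonneg : ∀ i, ∀ v > (0 : ℝ), 0 ≤ π i v)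
    (hπderiv : ∀ i, ∀ v > (0 : ℝ), HasDerivAt (π i) (π' i v) v)
    (hπ'cont : ∀ i, ContinuousOn (π' i) (Ioi 0))
    (hπblow : ∀ i, Tendsto (π i) (nhdsWithin 0 (Ioi 0)) atTop)
    (ws : Measure X → (Fin N → ℝ))
    (hws : ∀ μ : Measure X, IsProbabilityMeasure μ →
      (∀ i, 0 < ws μ i) ∧ IsMinOn (Jfun X c w0 σ π μ) {v | ∀ i, 0 < v i} (ws μ))
    (μn : ℕ → Measure X) (μ : Measure X)
    (hμn : ∀ n, IsProbabilityMeasure (μn n)) (hμ : IsProbabilityMeasure μ)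
    (hweak : ∀ f : C(X, ℝ),
      Tendsto (fun n => ∫ x, f x ∂(μn n)) atTop (nhds (∫ x, f x ∂μ))) :
    Tendsto (fun n => ws (μn n)) atTop (nhds (ws μ)) :=
  wstar_weak_star_continuous_general d N X hXc c hc w0 σ hσ π hπconv hπnonneg hπblow ws hws μn μ hμn
    hμ hweak
end

section
/- Fix σ > 0 and w₀ > 0, and suppose R_σ(x,w) ≥ w₀ for all x ∈ X and w ∈ ℝ_{≥0}^N. Define μ̃(x,w,α) = R_σ(x,w)^α / ∫_X R_σ(y,w)^α dy for α ≥ 0. Then for each j and each (x,w,α) with α ∈ [0,1], |∂μ̃/∂w_j (x,w,α)| ≤ (α/w₀) · R_σ(x,w)^α / ∫_X R_σ(y,w)^α dy, and consequently ∫_X |∇_w μ̃(x,w,α)| dx ≤ α√N / w₀. -/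
open MeasureTheory Filter Set

/-- The regularized revenue R_σ(x,w) = σ log(e^{w₀/σ} + Σᵢ e^{(wᵢ - cᵢ(x))/σ}). -/
noncomputable def Rsig {d N : ℕ} (c : Fin N → EuclideanSpace ℝ (Fin d) → ℝ)
    (w0 σ : ℝ) (w : Fin N → ℝ) (x : EuclideanSpace ℝ (Fin d)) : ℝ :=
  σ * Real.log (Real.exp (w0 / σ) + ∑ j, Real.exp ((w j - c j x) / σ))

/-- The normalized density μ̃(x,w,α) = R_σ(x,w)^α / ∫_X R_σ(y,w)^α dy. -/
noncomputable def densTilde {d N : ℕ} (X : Set (EuclideanSpace ℝ (Fin d)))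
    (c : Fin N → EuclideanSpace ℝ (Fin d) → ℝ) (w0 σ α : ℝ)
    (w : Fin N → ℝ) (x : EuclideanSpace ℝ (Fin d)) : ℝ :=
  Rsig c w0 σ w x ^ α / ∫ y in X, Rsig c w0 σ w y ^ α

/-! The partial derivative `∂R_σ/∂w_j` is a softmax weight, hence lies in `[0, 1]`. Together with
`R_σ ≥ w₀` this gives `0 ≤ ∂(R_σ^α)/∂w_j = α R_σ^(α-1) ∂R_σ/∂w_j ≤ (α/w₀) R_σ^α`, and for `α ≤ 1`
the uniform bound `α w₀^(α-1)` that allows differentiating the normaliser `∫_X R_σ^α` under the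
integral sign, where the same two-sided bound survives integration. The quotient rule then gives
`|∂μ̃/∂w_j| ≤ (α/w₀) μ̃`, and integrating the Euclidean norm of the gradient with `∫_X μ̃ = 1`
gives `α√N/w₀`. -/

open Real Function

lemma abs_deriv_div_le {f g : ℝ → ℝ} {f' g' k t : ℝ} (hf : HasDerivAt f f' t)
    (hg : HasDerivAt g g' t) (hft : 0 ≤ f t) (hgt : 0 < g t) (hf' : f' ∈ Icc 0 (k * f t))
    (hg' : g' ∈ Icc 0 (k * g t)) :
    |deriv (fun s => f s / g s) t| ≤ k * (f t / g t) := by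
  obtain ⟨hf'0, hf'k⟩ := hf'
  obtain ⟨hg'0, hg'k⟩ := hg'
  have hg2 : 0 < g t ^ 2 := pow_pos hgt 2
  rw [(hf.fun_div hg hgt.ne').deriv, abs_div, abs_of_pos hg2, div_le_iff₀ hg2,
    show k * (f t / g t) * g t ^ 2 = k * f t * g t by field_simp, abs_le]
  -- `f' g - f g'` lies between `-f g'` and `f' g`, and both are at most `k f g`.
  constructor <;> nlinarith [mul_nonneg hf'0 hgt.le, mul_nonneg hft hg'0,
    mul_le_mul_of_nonneg_right hf'k hgt.le, mul_le_mul_of_nonneg_left hg'k hft]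

lemma mul_mul_rpow_sub_one_mem_Icc {s r w0 α : ℝ} (hs : s ∈ Icc 0 1) (hw0 : 0 < w0)
    (hr : w0 ≤ r) (hα : 0 ≤ α) : s * α * r ^ (α - 1) ∈ Icc 0 (α / w0 * r ^ α) := by
  have hr0 : 0 < r := hw0.trans_le hr
  refine ⟨by have := hs.1; positivity, ?_⟩
  calc s * α * r ^ (α - 1) ≤ α * (r ^ α / r) := by
        rw [rpow_sub_one hr0.ne', mul_assoc]
        exact mul_le_of_le_one_left (by positivity) hs.2
    _ ≤ α * (r ^ α / w0) := by gcongr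
    _ = α / w0 * r ^ α := by ring

lemma mul_mul_rpow_sub_one_le {s r w0 α : ℝ} (hs : s ∈ Icc 0 1) (hw0 : 0 < w0)
    (hr : w0 ≤ r) (hα : α ∈ Icc 0 1) : s * α * r ^ (α - 1) ≤ α * w0 ^ (α - 1) := by
  have hα0 := hα.1
  have hr0 := hw0.trans_le hr
  calc s * α * r ^ (α - 1) ≤ α * r ^ (α - 1) := by
        rw [mul_assoc]
        exact mul_le_of_le_one_left (by positivity) hs.2
    _ ≤ α * w0 ^ (α - 1) :=
        mul_le_mul_of_nonneg_left (rpow_le_rpow_of_nonpos hw0 hr (by linarith [hα.2])) hα0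

lemma sqrt_sum_sq_le_of_abs_le {ι : Type*} [Fintype ι] {a : ι → ℝ} {m : ℝ}
    (ha : ∀ i, |a i| ≤ m) : √(∑ i, a i ^ 2) ≤ √(Fintype.card ι) * m := by
  rcases isEmpty_or_nonempty ι with hι | ⟨⟨i⟩⟩
  · simp
  have hm : 0 ≤ m := (abs_nonneg _).trans (ha i)
  calc √(∑ i, a i ^ 2) ≤ √(∑ _i : ι, m ^ 2) :=
        sqrt_le_sqrt (Finset.sum_le_sum fun i _ => sq_le_sq.2 ((ha i).trans (le_abs_self m)))
    _ = √(Fintype.card ι) * m := by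
        rw [Finset.sum_const, Finset.card_univ, nsmul_eq_mul, sqrt_mul (Nat.cast_nonneg _),
          sqrt_sq hm]

lemma integral_sqrt_sum_sq_le {ι Ω : Type*} [Fintype ι] [MeasurableSpace Ω] {μ : Measure Ω}
    {g : ι → Ω → ℝ} {m : Ω → ℝ} (hm : Integrable m μ) (hg : ∀ i x, |g i x| ≤ m x) :
    ∫ x, √(∑ i, g i x ^ 2) ∂μ ≤ √(Fintype.card ι) * ∫ x, m x ∂μ := by
  rw [← integral_const_mul]
  exact integral_mono_of_nonneg (.of_forall fun _ => sqrt_nonneg _) (hm.const_mul _)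
    (.of_forall fun x => sqrt_sum_sq_le_of_abs_le fun i => hg i x)

lemma setIntegral_mem_Icc_of_mem_Icc {Ω : Type*} [MeasurableSpace Ω] {μ : Measure Ω} {s : Set Ω}
    {f g : Ω → ℝ} {k : ℝ} (hs : MeasurableSet s) (hf : IntegrableOn f s μ)
    (hg : IntegrableOn g s μ) (hfg : ∀ x ∈ s, f x ∈ Icc 0 (k * g x)) :
    ∫ x in s, f x ∂μ ∈ Icc 0 (k * ∫ x in s, g x ∂μ) := by
  refine ⟨setIntegral_nonneg hs fun x hx => (hfg x hx).1, ?_⟩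
  rw [← integral_const_mul]
  exact setIntegral_mono_on hf (hg.const_mul k) hs fun x hx => (hfg x hx).2

noncomputable def softmaxWeight {d N : ℕ} (c : Fin N → EuclideanSpace ℝ (Fin d) → ℝ)
    (w0 σ : ℝ) (w : Fin N → ℝ) (j : Fin N) (x : EuclideanSpace ℝ (Fin d)) : ℝ :=
  exp ((w j - c j x) / σ) / (exp (w0 / σ) + ∑ i, exp ((w i - c i x) / σ))

section Rsig

variable {d N : ℕ} (c : Fin N → EuclideanSpace ℝ (Fin d) → ℝ) (w0 : ℝ)

lemma softmaxWeight_mem_Icc (σ : ℝ) (w : Fin N → ℝ) (j : Fin N) (x : EuclideanSpace ℝ (Fin d)) :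
    softmaxWeight c w0 σ w j x ∈ Icc 0 1 := by
  refine ⟨by unfold softmaxWeight; positivity, div_le_one_of_le₀ ?_ (by positivity)⟩
  have := Finset.single_le_sum (f := fun i => exp ((w i - c i x) / σ))
    (fun i _ => (exp_pos _).le) (Finset.mem_univ j)
  linarith [exp_pos (w0 / σ)]

lemma le_Rsig {σ : ℝ} (hσ : 0 < σ) (w : Fin N → ℝ) (x : EuclideanSpace ℝ (Fin d)) :
    w0 ≤ Rsig c w0 σ w x := by
  have hsum : 0 ≤ ∑ i, exp ((w i - c i x) / σ) := by positivity
  calc w0 = σ * log (exp (w0 / σ)) := by rw [log_exp]; field_simp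
    _ ≤ Rsig c w0 σ w x := by unfold Rsig; gcongr; linarith

variable {c}

lemma continuous_Rsig (σ : ℝ) (hc : ∀ i, Continuous (c i)) (w : Fin N → ℝ) :
    Continuous (Rsig c w0 σ w) := by
  unfold Rsig
  fun_prop (disch := exact fun x => by positivity)

lemma continuous_softmaxWeight (σ : ℝ) (hc : ∀ i, Continuous (c i)) (w : Fin N → ℝ) (j : Fin N) :
    Continuous (softmaxWeight c w0 σ w j) := by
  unfold softmaxWeight
  fun_prop (disch := exact fun x => by positivity)

variable {w0} {σ : ℝ}

lemma hasDerivAt_Rsig_update (hσ : σ ≠ 0) (w : Fin N → ℝ) (j : Fin N)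
    (x : EuclideanSpace ℝ (Fin d)) (t : ℝ) :
    HasDerivAt (fun s => Rsig c w0 σ (update w j s) x)
      (softmaxWeight c w0 σ (update w j t) j x) t := by
  have hterm : ∀ i, HasDerivAt (fun s => exp ((update w j s i - c i x) / σ))
      (exp ((update w j t i - c i x) / σ) * (Pi.single (M := fun _ => ℝ) j 1 i / σ)) t := fun i =>
    (((hasDerivAt_pi.1 (hasDerivAt_update w j t) i).sub_const (c i x)).div_const σ).exp
  have hS : HasDerivAt (fun s => exp (w0 / σ) + ∑ i, exp ((update w j s i - c i x) / σ))
      (exp ((update w j t j - c j x) / σ) / σ) t := by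
    refine ((HasDerivAt.fun_sum fun i _ => hterm i).const_add _).congr_deriv ?_
    simp [Pi.single_apply, mul_ite, div_eq_mul_inv]
  refine ((hS.log (by positivity)).const_mul σ).congr_deriv ?_
  unfold softmaxWeight
  field_simp

lemma Rsig_pos (hw0 : 0 < w0) (hσ : 0 < σ) (w : Fin N → ℝ) (x : EuclideanSpace ℝ (Fin d)) :
    0 < Rsig c w0 σ w x :=
  hw0.trans_le (le_Rsig c w0 hσ w x)

lemma continuous_Rsig_rpow (hc : ∀ i, Continuous (c i)) (hw0 : 0 < w0) (hσ : 0 < σ) (α : ℝ)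
    (w : Fin N → ℝ) : Continuous fun x => Rsig c w0 σ w x ^ α :=
  (continuous_Rsig w0 σ hc w).rpow_const fun x => .inl (Rsig_pos hw0 hσ w x).ne'

lemma hasDerivAt_Rsig_update_rpow (hw0 : 0 < w0) (hσ : 0 < σ) (α : ℝ) (w : Fin N → ℝ)
    (j : Fin N) (x : EuclideanSpace ℝ (Fin d)) (t : ℝ) :
    HasDerivAt (fun s => Rsig c w0 σ (update w j s) x ^ α)
      (softmaxWeight c w0 σ (update w j t) j x * α * Rsig c w0 σ (update w j t) x ^ (α - 1)) t :=
  (hasDerivAt_Rsig_update hσ.ne' w j x t).rpow_const (.inl (Rsig_pos hw0 hσ _ x).ne')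

variable {X : Set (EuclideanSpace ℝ (Fin d))} {α : ℝ}

lemma hasDerivAt_setIntegral_Rsig_update_rpow (hX : IsCompact X) (hc : ∀ i, Continuous (c i))
    (hw0 : 0 < w0) (hσ : 0 < σ) (hα : α ∈ Icc 0 1) (w : Fin N → ℝ) (j : Fin N) (t : ℝ) :
    HasDerivAt (fun s => ∫ y in X, Rsig c w0 σ (update w j s) y ^ α)
      (∫ y in X, softmaxWeight c w0 σ (update w j t) j y * α *
        Rsig c w0 σ (update w j t) y ^ (α - 1)) t := by
  have hweight := fun v y => softmaxWeight_mem_Icc c w0 σ v j y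
  refine (hasDerivAt_integral_of_dominated_loc_of_deriv_le (bound := fun _ => α * w0 ^ (α - 1))
    (Metric.ball_mem_nhds t one_pos)
    (.of_forall fun s => (continuous_Rsig_rpow hc hw0 hσ α _).aestronglyMeasurable)
    ((continuous_Rsig_rpow hc hw0 hσ α _).continuousOn.integrableOn_compact hX)
    (((continuous_softmaxWeight w0 σ hc _ j).mul continuous_const).mul
      (continuous_Rsig_rpow hc hw0 hσ (α - 1) _)).aestronglyMeasurable
    (.of_forall fun y s _ => ?_) (integrableOn_const hX.measure_lt_top.ne)
    (.of_forall fun y s _ => hasDerivAt_Rsig_update_rpow hw0 hσ α w j y s)).2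
  rw [Real.norm_of_nonneg
    (mul_mul_rpow_sub_one_mem_Icc (hweight _ y) hw0 (le_Rsig c w0 hσ _ y) hα.1).1]
  exact mul_mul_rpow_sub_one_le (hweight _ y) hw0 (le_Rsig c w0 hσ _ y) hα

lemma setIntegral_Rsig_rpow_pos (hX : IsCompact X) (hXpos : 0 < volume X)
    (hc : ∀ i, Continuous (c i)) (hw0 : 0 < w0) (hσ : 0 < σ) (w : Fin N → ℝ) :
    0 < ∫ y in X, Rsig c w0 σ w y ^ α := by
  have hpos := fun y => rpow_pos_of_pos (Rsig_pos (c := c) hw0 hσ w y) α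
  rwa [setIntegral_pos_iff_support_of_nonneg_ae (.of_forall fun y => (hpos y).le)
    ((continuous_Rsig_rpow hc hw0 hσ α w).continuousOn.integrableOn_compact hX),
    support_eq_univ fun y => (hpos y).ne', univ_inter]

lemma abs_deriv_densTilde_update_le (hX : IsCompact X) (hXpos : 0 < volume X)
    (hc : ∀ i, Continuous (c i)) (hw0 : 0 < w0) (hσ : 0 < σ) (hα : α ∈ Icc 0 1)
    (w : Fin N → ℝ) (j : Fin N) (x : EuclideanSpace ℝ (Fin d)) (t : ℝ) :
    |deriv (fun s => densTilde X c w0 σ α (update w j s) x) t| ≤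
      α / w0 * densTilde X c w0 σ α (update w j t) x := by
  have hderiv_mem := fun y => mul_mul_rpow_sub_one_mem_Icc
    (softmaxWeight_mem_Icc c w0 σ (update w j t) j y) hw0 (le_Rsig c w0 hσ (update w j t) y) hα.1
  refine abs_deriv_div_le (hasDerivAt_Rsig_update_rpow hw0 hσ α w j x t)
    (hasDerivAt_setIntegral_Rsig_update_rpow hX hc hw0 hσ hα w j t)
    (rpow_nonneg (Rsig_pos hw0 hσ _ x).le α) (setIntegral_Rsig_rpow_pos hX hXpos hc hw0 hσ _)
    (hderiv_mem x) (setIntegral_mem_Icc_of_mem_Icc hX.measurableSet ?_ ?_ fun y _ => hderiv_mem y)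
  · exact (((continuous_softmaxWeight w0 σ hc _ j).mul continuous_const).mul
      (continuous_Rsig_rpow hc hw0 hσ (α - 1) _)).continuousOn.integrableOn_compact hX
  · exact (continuous_Rsig_rpow hc hw0 hσ α _).continuousOn.integrableOn_compact hX

lemma setIntegral_densTilde (w : Fin N → ℝ) (hI : ∫ y in X, Rsig c w0 σ w y ^ α ≠ 0) :
    ∫ x in X, densTilde X c w0 σ α w x = 1 := by
  unfold densTilde
  rw [integral_div]
  exact div_self hI

end Rsig

theorem densTilde_gradient_bound_general (d N : ℕ) (X : Set (EuclideanSpace ℝ (Fin d)))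
    (hXc : IsCompact X) (hXpos : 0 < volume X)
    (c : Fin N → EuclideanSpace ℝ (Fin d) → ℝ) (hc : ∀ i, Continuous (c i))
    (w0 σ α : ℝ) (hw0 : 0 < w0) (hσ : 0 < σ) (hα : α ∈ Icc (0 : ℝ) 1) :
    ∀ w : Fin N → ℝ, (∀ i, 0 ≤ w i) →
      (∀ x ∈ X, ∀ j : Fin N,
        |deriv (fun t => densTilde X c w0 σ α (Function.update w j t) x) (w j)| ≤
          α / w0 * (Rsig c w0 σ w x ^ α / ∫ y in X, Rsig c w0 σ w y ^ α)) ∧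
      (∫ x in X, Real.sqrt (∑ j : Fin N,
          (deriv (fun t => densTilde X c w0 σ α (Function.update w j t) x) (w j)) ^ 2)) ≤
        α * Real.sqrt N / w0 := by
  intro w _
  have hderiv : ∀ x j, |deriv (fun t => densTilde X c w0 σ α (update w j t) x) (w j)| ≤
      α / w0 * densTilde X c w0 σ α w x := fun x j => by
    simpa only [update_eq_self] using
      abs_deriv_densTilde_update_le hXc hXpos hc hw0 hσ hα w j x (w j)
  refine ⟨fun x _ j => hderiv x j, ?_⟩
  have hint : IntegrableOn (fun x => α / w0 * densTilde X c w0 σ α w x) X :=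
    (((continuous_Rsig_rpow hc hw0 hσ α w).div_const _).const_mul _).continuousOn
      |>.integrableOn_compact hXc
  calc _ ≤ √(Fintype.card (Fin N)) * ∫ x in X, α / w0 * densTilde X c w0 σ α w x :=
        integral_sqrt_sum_sq_le hint fun j x => hderiv x j
    _ = α * √N / w0 := by
        rw [integral_const_mul, setIntegral_densTilde w
          (setIntegral_Rsig_rpow_pos hXc hXpos hc hw0 hσ w).ne', Fintype.card_fin]
        ring

/-- if R_σ ≥ w₀ on X, then for α ∈ [0,1] the partial derivatives of the
density μ̃(x,w,α) = R_σ(x,w)^α / ∫_X R_σ^α in the wage variables satisfy the pointwise bound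
|∂μ̃/∂wⱼ| ≤ (α/w₀)·R_σ(x,w)^α/∫_X R_σ^α, and hence ∫_X |∇_w μ̃| dx ≤ α√N / w₀. -/
theorem densTilde_gradient_bound (d N : ℕ) (X : Set (EuclideanSpace ℝ (Fin d)))
    (hXc : IsCompact X) (hXpos : 0 < volume X)
    (c : Fin N → EuclideanSpace ℝ (Fin d) → ℝ) (hc : ∀ i, Continuous (c i))
    (w0 σ α : ℝ) (hw0 : 0 < w0) (hσ : 0 < σ) (hα : α ∈ Icc (0 : ℝ) 1)
    (hRlb : ∀ x ∈ X, ∀ w : Fin N → ℝ, (∀ i, 0 ≤ w i) → w0 ≤ Rsig c w0 σ w x) :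
    ∀ w : Fin N → ℝ, (∀ i, 0 ≤ w i) →
      (∀ x ∈ X, ∀ j : Fin N,
        |deriv (fun t => densTilde X c w0 σ α (Function.update w j t) x) (w j)| ≤
          α / w0 * (Rsig c w0 σ w x ^ α / ∫ y in X, Rsig c w0 σ w y ^ α)) ∧
      (∫ x in X, Real.sqrt (∑ j : Fin N,
          (deriv (fun t => densTilde X c w0 σ α (Function.update w j t) x) (w j)) ^ 2)) ≤
        α * Real.sqrt N / w0 :=
  densTilde_gradient_bound_general d N X hXc hXpos c hc w0 σ α hw0 hσ hα
end

section
/- Let G : (0,∞)^N × [0,α₀] → ℝ^N be C^1 and K = [w̲,w̄]^N ⊂ (0,∞)^N compact such that (i) all zeros of G(·,α) lie in K for every α ∈ [0,α₀], (ii) the Jacobian D_w G(w,α) is invertible at every zero (w,α) of G, and (iii) G(·,0) has exactly one zero. Then for every α ∈ [0,α₀], G(·,α) has exactly one zero. -/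
/-!
The zeros `(w, α)` of `G` form a compact set `Z`, since they stay in the box `[w̲, w̄]^N`. By the
inverse function theorem applied to `G(·, β)`, uniformly for `β` near `α`, every zero continues
uniquely: arbitrarily small neighbourhoods of `w` contain exactly one zero of `G(·, β)` for all
`β` near `α`. Compactness turns this into local constancy of "`G(·, α)` has exactly one zero":
if it does, all zeros for nearby parameters stay near the unique one; if it has none, nearby
parameters have none either; if it has two, both continue. As `[0, α₀]` is connected and the
property holds at `0`, it holds everywhere.
-/

open Set Filter Topology Metric

section Continuation

variable {X T : Type*} [TopologicalSpace X] [TopologicalSpace T]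

def HasUniqueLocalContinuation (Z : Set (X × T)) (S : Set T) : Prop :=
  ∀ x t, (x, t) ∈ Z → ∀ V ∈ 𝓝 x, ∃ W ∈ 𝓝 x, W ⊆ V ∧
    ∀ᶠ t' in 𝓝[S] t, ∃! x', x' ∈ W ∧ (x', t') ∈ Z

variable {Z : Set (X × T)} {S : Set T}

theorem IsCompact.eventually_fibre_subset [T2Space T] (hZ : IsCompact Z) {W : Set X}
    (hW : IsOpen W) {t : T} (ht : ∀ x, (x, t) ∈ Z → x ∈ W) :
    ∀ᶠ t' in 𝓝 t, ∀ x, (x, t') ∈ Z → x ∈ W := by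
  have hC : IsClosed (Prod.snd '' (Z \ W ×ˢ univ)) :=
    ((hZ.diff (hW.prod isOpen_univ)).image continuous_snd).isClosed
  have htC : t ∉ Prod.snd '' (Z \ W ×ˢ univ) := by
    rintro ⟨⟨x, t⟩, ⟨hxZ, hxW⟩, rfl⟩
    exact hxW ⟨ht x hxZ, trivial⟩
  filter_upwards [hC.isOpen_compl.mem_nhds htC] with t' ht' x hx
  by_contra hxW
  exact ht' ⟨(x, t'), ⟨hx, fun h => hxW h.1⟩, rfl⟩

theorem HasUniqueLocalContinuation.eventually_existsUnique [T2Space T]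
    (hloc : HasUniqueLocalContinuation Z S) (hZ : IsCompact Z) {t : T}
    (ht : ∃! x, (x, t) ∈ Z) : ∀ᶠ t' in 𝓝[S] t, ∃! x, (x, t') ∈ Z := by
  obtain ⟨x, hx, hxu⟩ := ht
  obtain ⟨W, hW, -, hWu⟩ := hloc x t hx univ univ_mem
  obtain ⟨O, hOW, hO, hxO⟩ := mem_nhds_iff.1 hW
  have hsub := hZ.eventually_fibre_subset hO fun y hy => hxu y hy ▸ hxO
  filter_upwards [nhdsWithin_le_nhds hsub, hWu] with t' hsub' ⟨y, ⟨_, hy⟩, hyu⟩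
  exact ⟨y, hy, fun y' hy' => hyu y' ⟨hOW (hsub' y' hy'), hy'⟩⟩

theorem HasUniqueLocalContinuation.eventually_not_existsUnique [T2Space X] [T2Space T]
    (hloc : HasUniqueLocalContinuation Z S) (hZ : IsCompact Z) {t : T}
    (ht : ¬∃! x, (x, t) ∈ Z) : ∀ᶠ t' in 𝓝[S] t, ¬∃! x, (x, t') ∈ Z := by
  by_cases hne : ∃ x, (x, t) ∈ Z
  · obtain ⟨x, hx⟩ := hne
    obtain ⟨y, hy, hyx⟩ : ∃ y, (y, t) ∈ Z ∧ y ≠ x := by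
      by_contra! h
      exact ht ⟨x, hx, h⟩
    obtain ⟨Vx, Vy, hVx, hVy, hxV, hyV, hV⟩ := t2_separation hyx.symm
    obtain ⟨Wx, -, hWx, hx'⟩ := hloc x t hx Vx (hVx.mem_nhds hxV)
    obtain ⟨Wy, -, hWy, hy'⟩ := hloc y t hy Vy (hVy.mem_nhds hyV)
    filter_upwards [hx', hy'] with t' ⟨x', ⟨hx'W, hx'⟩, _⟩ ⟨y', ⟨hy'W, hy'⟩, _⟩ hu
    exact hV.ne_of_mem (hWx hx'W) (hWy hy'W) (hu.unique hx' hy')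
  · rw [not_exists] at hne
    filter_upwards [nhdsWithin_le_nhds (hZ.eventually_fibre_subset isOpen_empty hne)] with t' ht'
    exact fun ⟨x, hx, _⟩ => ht' x hx

theorem IsPreconnected.existsUnique_of_hasUniqueLocalContinuation [T2Space X] [T2Space T]
    (hS : IsPreconnected S) (hZ : IsCompact Z) (hloc : HasUniqueLocalContinuation Z S)
    {t₀ t : T} (ht₀ : t₀ ∈ S) (ht : t ∈ S) (h₀ : ∃! x, (x, t₀) ∈ Z) : ∃! x, (x, t) ∈ Z := by
  refine (hS.induction₂ (fun a b => (∃! x, (x, a) ∈ Z) ↔ ∃! x, (x, b) ∈ Z) (fun a _ => ?_)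
    (fun _ _ _ _ _ _ => Iff.trans) (fun _ _ _ _ => Iff.symm) ht₀ ht).1 h₀
  by_cases ha : ∃! x, (x, a) ∈ Z
  · filter_upwards [hloc.eventually_existsUnique hZ ha] with b hb using iff_of_true ha hb
  · filter_upwards [hloc.eventually_not_existsUnique hZ ha] with b hb using iff_of_false ha hb

end Continuation

section LocalZeros

variable {E F : Type*} [NormedAddCommGroup E] [NormedSpace ℝ E] [NormedAddCommGroup F]
  [NormedSpace ℝ F]

theorem HasFDerivWithinAt.hasFDerivAt_prodMk_left {P : Type*} [NormedAddCommGroup P]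
    [NormedSpace ℝ P] {f : E × P → F} {f' : E × P →L[ℝ] F} {U : Set E} {S : Set P} {p : E × P}
    (hf : HasFDerivWithinAt f f' (U ×ˢ S) p) (hU : U ∈ 𝓝 p.1) (hp : p.2 ∈ S) :
    HasFDerivAt (fun v => f (v, p.2)) (f'.comp (.inl ℝ E P)) p.1 :=
  (hf.comp p.1 (_root_.hasFDerivAt_prodMk_left p.1 p.2).hasFDerivWithinAt
    fun _ hv => mk_mem_prod hv hp).hasFDerivAt hU

variable [CompleteSpace E]

theorem exists_nhds_existsUnique_zero {P : Type*} [TopologicalSpace P] {f : E × P → F}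
    {U : Set E} {S : Set P} {D : E × P → E →L[ℝ] F} {A : E ≃L[ℝ] F} {w : E} {α : P}
    (hU : U ∈ 𝓝 w) (hf : ContinuousWithinAt (fun β => f (w, β)) S α) (h0 : f (w, α) = 0)
    (hD : ∀ p ∈ U ×ˢ S, HasFDerivAt (fun v => f (v, p.2)) (D p) p.1)
    (hDc : ContinuousWithinAt D (U ×ˢ S) (w, α)) (hA : D (w, α) = A) {V : Set E}
    (hV : V ∈ 𝓝 w) :
    ∃ W ∈ 𝓝 w, W ⊆ V ∧ ∀ᶠ β in 𝓝[S] α, ∃! v, v ∈ W ∧ f (v, β) = 0 := by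
  rcases A.subsingleton_or_nnnorm_symm_pos with hE | hA'
  · have : Subsingleton F := A.toEquiv.subsingleton_congr.1 hE
    exact ⟨V, hV, subset_rfl, .of_forall fun β =>
      ⟨w, ⟨mem_of_mem_nhds hV, Subsingleton.elim _ _⟩, fun _ _ => Subsingleton.elim _ _⟩⟩
  set N := ‖(A.symm : F →L[ℝ] E)‖₊
  set c : NNReal := N⁻¹ / 2
  have hc : 0 < c := half_pos (inv_pos.2 hA')
  have hcN : c < N⁻¹ := NNReal.half_lt_self (inv_pos.2 hA').ne'
  have hnear : ∀ᶠ p in 𝓝 w ×ˢ 𝓝[S] α, ‖D p - A‖ < c := by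
    have h := hDc.eventually_mem (ball_mem_nhds _ hc)
    rw [nhdsWithin_prod_eq, nhdsWithin_eq_nhds.2 hU, hA] at h
    filter_upwards [h] with p hp
    rwa [mem_ball, dist_eq_norm] at hp
  obtain ⟨pa, hpa, pb, hpb, hp⟩ := eventually_prod_iff.1 hnear
  obtain ⟨ε, hε, hεpa⟩ := nhds_basis_closedBall.eventually_iff.1 (hpa.and (inter_mem hV hU))
  have hr : 0 < ((N : ℝ)⁻¹ - c) * ε := mul_pos (sub_pos.2 (by exact_mod_cast hcN)) hε
  have hsmall : ∀ᶠ β in 𝓝[S] α, ‖f (w, β)‖ ≤ ((N : ℝ)⁻¹ - c) * ε := by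
    simpa only [h0, mem_closedBall_zero_iff] using hf.eventually_mem (closedBall_mem_nhds _ hr)
  refine ⟨closedBall w ε, closedBall_mem_nhds w hε, fun v hv => (hεpa hv).2.1, ?_⟩
  filter_upwards [hpb, hsmall, self_mem_nhdsWithin] with β hβ hβsmall hβS
  -- On the ball `f (·, β)` stays `c`-close to `A` with `c < ‖A⁻¹‖⁻¹`: it is injective there and
  -- its image contains a ball around `f (w, β)` large enough to contain `0`.
  have happrox : ApproximatesLinearOn (fun v => f (v, β)) (A : E →L[ℝ] F) (closedBall w ε) c :=
    fun x hx y hy => (convex_closedBall w ε).norm_image_sub_le_of_norm_hasFDerivWithin_le'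
      (f := fun v => f (v, β)) (fun v hv => (hD (v, β) ⟨(hεpa hv).2.2, hβS⟩).hasFDerivWithinAt)
      (fun v hv => (hp (hεpa hv).1 hβ).le) hy hx
  have h0mem : (0 : F) ∈ closedBall (f (w, β)) (((N : ℝ)⁻¹ - c) * ε) := by
    rwa [mem_closedBall_iff_norm, zero_sub, norm_neg]
  obtain ⟨v, hv, hv0⟩ := happrox.surjOn_closedBall_of_nonlinearRightInverse
    A.toNonlinearRightInverse hε.le subset_rfl h0mem
  exact ⟨v, ⟨hv, hv0⟩, fun v' ⟨hv', hv'0⟩ =>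
    happrox.injOn (.inr hcN) hv' hv (hv'0.trans hv0.symm)⟩

theorem ContDiffOn.hasUniqueLocalContinuation [CompleteSpace F] {P : Type*}
    [NormedAddCommGroup P] [NormedSpace ℝ P] {f : E × P → F} {U : Set E} {S : Set P}
    (hf : ContDiffOn ℝ 1 f (U ×ˢ S)) (hU : IsOpen U) (hUS : UniqueDiffOn ℝ (U ×ˢ S))
    (hinv : ∀ p ∈ U ×ˢ S, f p = 0 → Function.Bijective (fderiv ℝ (fun v => f (v, p.2)) p.1)) :
    HasUniqueLocalContinuation {p ∈ U ×ˢ S | f p = 0} S := by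
  rintro x t ⟨hxt, hx0⟩ V hV
  set D : E × P → E →L[ℝ] F := fun p => (fderivWithin ℝ f (U ×ˢ S) p).comp (.inl ℝ E P)
  have hD : ∀ p ∈ U ×ˢ S, HasFDerivAt (fun v => f (v, p.2)) (D p) p.1 := fun p hp =>
    ((hf.differentiableOn one_ne_zero) p hp).hasFDerivWithinAt.hasFDerivAt_prodMk_left
      (hU.mem_nhds hp.1) hp.2
  have hDc : ContinuousOn D (U ×ˢ S) :=
    (hf.continuousOn_fderivWithin hUS le_rfl).clm_comp continuousOn_const
  have hbij := hinv _ hxt hx0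
  rw [(hD _ hxt).fderiv] at hbij
  have hslice : ContinuousWithinAt (fun β => f (x, β)) S t :=
    (hf.continuousOn.comp (continuousOn_const.prodMk continuousOn_id)
      fun _ hβ => ⟨hxt.1, hβ⟩) t hxt.2
  obtain ⟨W, hW, hWV, hWu⟩ := exists_nhds_existsUnique_zero (hU.mem_nhds hxt.1) hslice hx0 hD
    (hDc _ hxt) (A := .ofBijective (D (x, t)) (LinearMap.ker_eq_bot.2 hbij.1)
      (LinearMap.range_eq_top.2 hbij.2)) rfl (inter_mem hV (hU.mem_nhds hxt.1))
  refine ⟨W, hW, hWV.trans inter_subset_left, ?_⟩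
  filter_upwards [hWu, self_mem_nhdsWithin] with β ⟨v, ⟨hvW, hv0⟩, hvu⟩ hβ
  exact ⟨v, ⟨hvW, ⟨(hWV hvW).2, hβ⟩, hv0⟩, fun v' ⟨hv'W, _, hv'0⟩ => hvu v' ⟨hv'W, hv'0⟩⟩

end LocalZeros

theorem ContinuousOn.isCompact_sep_eq_of_subset {α β : Type*} [TopologicalSpace α] [T2Space α]
    [TopologicalSpace β] [T1Space β] {f : α → β} {s K : Set α} {b : β} (hf : ContinuousOn f s)
    (hK : IsCompact K) (hKs : K ⊆ s) (h : {p ∈ s | f p = b} ⊆ K) :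
    IsCompact {p ∈ s | f p = b} := by
  have hsep : {p ∈ s | f p = b} = K ∩ f ⁻¹' {b} :=
    Subset.antisymm (fun p hp => ⟨h hp, hp.2⟩) fun p hp => ⟨hKs hp.1, hp.2⟩
  rw [hsep]
  exact hK.of_isClosed_subset
    ((hf.mono hKs).preimage_isClosed_of_isClosed hK.isClosed isClosed_singleton) inter_subset_left

theorem continuation_uniqueness_general (N : ℕ) (α₀ : ℝ)
    (G : (Fin N → ℝ) → ℝ → (Fin N → ℝ))
    (hG : ContDiffOn ℝ 1 (fun p : (Fin N → ℝ) × ℝ => G p.1 p.2)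
        ({w : Fin N → ℝ | ∀ i, 0 < w i} ×ˢ Icc 0 α₀))
    (wlo whi : ℝ) (hlo : 0 < wlo)
    (hzeros : ∀ α ∈ Icc (0 : ℝ) α₀, ∀ w : Fin N → ℝ, (∀ i, 0 < w i) → G w α = 0 →
        ∀ i, w i ∈ Icc wlo whi)
    (hjac : ∀ α ∈ Icc (0 : ℝ) α₀, ∀ w : Fin N → ℝ, (∀ i, 0 < w i) → G w α = 0 →
        Function.Bijective ⇑(fderiv ℝ (fun v => G v α) w))
    (huniq0 : ∃! w : Fin N → ℝ, (∀ i, 0 < w i) ∧ G w 0 = 0) :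
    ∀ α ∈ Icc (0 : ℝ) α₀, ∃! w : Fin N → ℝ, (∀ i, 0 < w i) ∧ G w α = 0 := by
  intro α hα
  -- For `α₀ > 0` the interval has unique derivatives, needed for the continuity of `D_w G`.
  rcases le_or_gt α₀ 0 with hα₀ | hα₀
  · obtain rfl : α = 0 := le_antisymm (hα.2.trans hα₀) hα.1
    exact huniq0
  set U : Set (Fin N → ℝ) := {w | ∀ i, 0 < w i}
  set Z := {p ∈ U ×ˢ Icc 0 α₀ | G p.1 p.2 = 0}
  have hU : IsOpen U := by
    simp only [U, ofPred_forall]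
    exact isOpen_iInter_of_finite fun i => isOpen_lt continuous_const (continuous_apply i)
  have hZ : IsCompact Z := hG.continuousOn.isCompact_sep_eq_of_subset
    ((isCompact_univ_pi fun _ => isCompact_Icc).prod isCompact_Icc)
    (prod_mono (fun w hw i => hlo.trans_le (hw i trivial).1) subset_rfl)
    fun p hp => ⟨fun i _ => hzeros p.2 hp.1.2 p.1 hp.1.1 hp.2 i, hp.1.2⟩
  have hloc : HasUniqueLocalContinuation Z (Icc 0 α₀) :=
    hG.hasUniqueLocalContinuation hU (hU.uniqueDiffOn.prod (uniqueDiffOn_Icc hα₀))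
      fun p hp h0 => hjac p.2 hp.2 p.1 hp.1 h0
  have hfibre : ∀ β ∈ Icc 0 α₀, ∀ w, (w, β) ∈ Z ↔ (∀ i, 0 < w i) ∧ G w β = 0 :=
    fun β hβ w => ⟨fun h => ⟨h.1.1, h.2⟩, fun h => ⟨⟨h.1, hβ⟩, h.2⟩⟩
  have h₀ : (0 : ℝ) ∈ Icc 0 α₀ := left_mem_Icc.2 hα₀.le
  refine (existsUnique_congr (hfibre α hα)).1 ?_
  exact isPreconnected_Icc.existsUnique_of_hasUniqueLocalContinuation hZ hloc h₀ hα
    ((existsUnique_congr (hfibre 0 h₀)).2 huniq0)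

/-- abstract continuation/uniqueness argument: let G be C¹ on
(0,∞)^N × [0,α₀], suppose all zeros of G(·,α) lie in a fixed compact box
K = [w̲,w̄]^N ⊂ (0,∞)^N, that the Jacobian D_w G is invertible at every zero, and that
G(·,0) has exactly one zero. Then G(·,α) has exactly one zero for every α ∈ [0,α₀]. -/
theorem continuation_uniqueness (N : ℕ) (α₀ : ℝ) (hα₀ : 0 ≤ α₀)
    (G : (Fin N → ℝ) → ℝ → (Fin N → ℝ))
    (hG : ContDiffOn ℝ 1 (fun p : (Fin N → ℝ) × ℝ => G p.1 p.2)
        ({w : Fin N → ℝ | ∀ i, 0 < w i} ×ˢ Icc 0 α₀))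
    (wlo whi : ℝ) (hlo : 0 < wlo) (hlohi : wlo ≤ whi)
    (hzeros : ∀ α ∈ Icc (0 : ℝ) α₀, ∀ w : Fin N → ℝ, (∀ i, 0 < w i) → G w α = 0 →
        ∀ i, w i ∈ Icc wlo whi)
    (hjac : ∀ α ∈ Icc (0 : ℝ) α₀, ∀ w : Fin N → ℝ, (∀ i, 0 < w i) → G w α = 0 →
        Function.Bijective ⇑(fderiv ℝ (fun v => G v α) w))
    (huniq0 : ∃! w : Fin N → ℝ, (∀ i, 0 < w i) ∧ G w 0 = 0) :
    ∀ α ∈ Icc (0 : ℝ) α₀, ∃! w : Fin N → ℝ, (∀ i, 0 < w i) ∧ G w α = 0 :=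
  continuation_uniqueness_general N α₀ G hG wlo whi hlo hzeros hjac huniq0
end
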